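/- arXiv:1909.10215 — 6 statements merged into one kernel-verified Lean document; each statement's English description precedes it below -/
import Mathlib

section
/- If uv₁ and uv₂ are two distinct edges incident to a common vertex u in a Euclidean minimum spanning tree of a finite point set V in the plane, then the angle ∠(v₁, u, v₂) is at least π/3. -/
/-!
Exchange argument. Say `uv₁` is the shorter of the two edges. If `∠ v₁ u v₂ < π / 3`, the law of
cosines makes `v₁v₂` strictly shorter than `uv₂`; replacing `uv₂` by `v₁v₂` keeps the graph
connected (through `u – v₁ – v₂`) and strictly decreases its length, and a spanning tree of the new
graph is then lighter than `T`.
-/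

open EuclideanGeometry Real Finset

/-- Total Euclidean length of the edges of a graph on a finite point set. -/
noncomputable def edgeWeight {V : Type*} [Fintype V]
    (p : V → EuclideanSpace ℝ (Fin 2)) (T : SimpleGraph V) : ℝ := by
  classical
  exact ∑ e ∈ T.edgeFinset,
    Sym2.lift ⟨fun a b => dist (p a) (p b), fun a b => by simp [dist_comm]⟩ e

/-- `T` is a Euclidean minimum spanning tree of the point set `p '' V`. -/
def IsEMST {V : Type*} [Fintype V] (p : V → EuclideanSpace ℝ (Fin 2))
    (T : SimpleGraph V) : Prop :=
  T.Connected ∧ T.IsAcyclic ∧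
    ∀ T' : SimpleGraph V, T'.Connected → T'.IsAcyclic → edgeWeight p T ≤ edgeWeight p T'

section Geometry

variable {V P : Type*} [NormedAddCommGroup V] [InnerProductSpace ℝ V] [MetricSpace P]
  [NormedAddTorsor V P]

theorem EuclideanGeometry.dist_lt_of_angle_lt_pi_div_three {a b c : P}
    (hle : dist b a ≤ dist b c) (hangle : ∠ a b c < π / 3) : dist a c < dist b c := by
  have hab : a ≠ b := by
    -- an angle with a degenerate side is `π / 2` by convention
    rintro rfl
    rw [angle_self_left] at hangle
    linarith [pi_pos]
  have hcos : 1 / 2 < cos (∠ a b c) := by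
    rw [← cos_pi_div_three]
    exact cos_lt_cos_of_nonneg_of_le_pi (angle_nonneg a b c) (by linarith [pi_pos]) hangle
  have hpos : 0 < dist a b := dist_pos.mpr hab
  have hlaw := law_cos a b c
  rw [dist_comm b a, dist_comm b c] at *
  nlinarith [mul_lt_mul_of_pos_left hcos (mul_pos hpos (hpos.trans_le hle)),
    dist_nonneg (x := a) (y := c)]

end Geometry

namespace SimpleGraph

variable {V : Type*}

theorem Connected.sup_edge_deleteEdges {G : SimpleGraph V} (hG : G.Connected) {u v₁ v₂ : V}
    (h : G.Adj u v₁) (hne : v₁ ≠ v₂) : ((G ⊔ edge v₁ v₂).deleteEdges {s(u, v₂)}).Connected := by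
  refine (hG.mono le_sup_left).connected_delete_edge_of_not_isBridge fun hbridge => ?_
  have huv₁ : ((G ⊔ edge v₁ v₂).deleteEdges {s(u, v₂)}).Adj u v₁ := by
    simpa [h, hne] using Or.inl fun _ => h.ne.symm
  have hv₁v₂ : ((G ⊔ edge v₁ v₂).deleteEdges {s(u, v₂)}).Adj v₁ v₂ := by
    simp [edge_adj, hne, h.ne.symm]
  exact hbridge (huv₁.reachable.trans hv₁v₂.reachable)

end SimpleGraph

section EdgeLength

variable {V P : Type*} [PseudoMetricSpace P] (p : V → P)

noncomputable def edgeLength : Sym2 V → ℝ :=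
  Sym2.lift ⟨fun a b => dist (p a) (p b), fun _ _ => dist_comm _ _⟩

@[simp]
theorem edgeLength_mk (a b : V) : edgeLength p s(a, b) = dist (p a) (p b) := rfl

theorem edgeLength_nonneg (e : Sym2 V) : 0 ≤ edgeLength p e := by
  induction e using Sym2.ind
  exact dist_nonneg

end EdgeLength

section EdgeWeight

open SimpleGraph

variable {V : Type*} [Fintype V] (p : V → EuclideanSpace ℝ (Fin 2))

theorem edgeWeight_eq_sum (G : SimpleGraph V) [Fintype G.edgeSet] :
    edgeWeight p G = ∑ e ∈ G.edgeFinset, edgeLength p e := by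
  unfold edgeWeight edgeLength
  congr
  exact Subsingleton.elim _ _

theorem edgeWeight_mono {G H : SimpleGraph V} (h : G ≤ H) : edgeWeight p G ≤ edgeWeight p H := by
  classical
  rw [edgeWeight_eq_sum, edgeWeight_eq_sum]
  exact sum_le_sum_of_subset_of_nonneg (edgeFinset_mono h) fun e _ _ => edgeLength_nonneg p e

theorem edgeWeight_sup_edge_le (G : SimpleGraph V) (a b : V) :
    edgeWeight p (G ⊔ edge a b) ≤ edgeWeight p G + dist (p a) (p b) := by
  classical
  by_cases hab : a = b ∨ G.Adj a b
  · rw [sup_eq_left.mpr ((edge_le_iff G).mpr hab)]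
    linarith [dist_nonneg (x := p a) (y := p b)]
  · push Not at hab
    rw [edgeWeight_eq_sum, edgeWeight_eq_sum, edgeFinset_sup_edge G hab.2 hab.1, sum_cons,
      add_comm, edgeLength_mk]

theorem edgeWeight_deleteEdges_add {G : SimpleGraph V} {a b : V} (h : G.Adj a b) :
    edgeWeight p (G.deleteEdges {s(a, b)}) + dist (p a) (p b) = edgeWeight p G := by
  classical
  have herase : (G.deleteEdges {s(a, b)}).edgeFinset = G.edgeFinset.erase s(a, b) := by
    ext e
    simp [and_comm]
  rw [edgeWeight_eq_sum, edgeWeight_eq_sum, herase, ← edgeLength_mk,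
    sum_erase_add _ _ (mem_edgeFinset.mpr h)]

theorem IsEMST.edgeWeight_le_of_connected {T G : SimpleGraph V} (hT : IsEMST p T)
    (hG : G.Connected) : edgeWeight p T ≤ edgeWeight p G := by
  obtain ⟨S, hSG, hS⟩ := hG.exists_isTree_le
  exact (hT.2.2 S hS.connected hS.isAcyclic).trans (edgeWeight_mono p hSG)

end EdgeWeight

theorem mst_angle_ge_pi_div_three_general {V : Type*} [Fintype V]
    (p : V → EuclideanSpace ℝ (Fin 2))
    (T : SimpleGraph V) (hT : IsEMST p T)
    (u v₁ v₂ : V) (h1 : T.Adj u v₁) (h2 : T.Adj u v₂) (hne : v₁ ≠ v₂) :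
    π / 3 ≤ ∠ (p v₁) (p u) (p v₂) := by
  wlog hle : dist (p u) (p v₁) ≤ dist (p u) (p v₂) generalizing v₁ v₂
  · rw [angle_comm]
    exact this v₂ v₁ h2 h1 hne.symm (le_of_not_ge hle)
  by_contra! hangle
  have hshort : dist (p v₁) (p v₂) < dist (p u) (p v₂) :=
    dist_lt_of_angle_lt_pi_div_three hle hangle
  have hmin := hT.edgeWeight_le_of_connected p (hT.1.sup_edge_deleteEdges h1 hne)
  have hdelete := edgeWeight_deleteEdges_add p (G := T ⊔ SimpleGraph.edge v₁ v₂) (Or.inl h2)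
  have hadd := edgeWeight_sup_edge_le p T v₁ v₂
  linarith

/-- Two distinct edges `uv₁`, `uv₂` of a Euclidean minimum spanning tree of a finite planar
point set make an angle of at least `π/3` at `u`. -/
theorem mst_angle_ge_pi_div_three {V : Type*} [Fintype V]
    (p : V → EuclideanSpace ℝ (Fin 2)) (hp : Function.Injective p)
    (T : SimpleGraph V) (hT : IsEMST p T)
    (u v₁ v₂ : V) (h1 : T.Adj u v₁) (h2 : T.Adj u v₂) (hne : v₁ ≠ v₂) :
    π / 3 ≤ ∠ (p v₁) (p u) (p v₂) :=
  mst_angle_ge_pi_div_three_general p T hT u v₁ v₂ h1 h2 hne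
end

section
/- Let x, y > 0 with x ≤ y, and let 0 < φ ≤ θ < π/2. Then x + (2x·sin(φ/2) + y − x)·(π/2) ≤ y · max(π/2, π·sin(θ/2) + 1). -/
open Real

/-- Real-number inequality underlying the spanning-ratio bound: for `0 < x ≤ y` and
`0 < φ ≤ θ < π/2`, `x + (2x sin(φ/2) + y - x)·(π/2) ≤ y · max(π/2, π sin(θ/2) + 1)`. -/
theorem spanning_ratio_ineq (x y φ θ : ℝ)
    (hx : 0 < x) (hxy : x ≤ y) (hφ : 0 < φ) (hφθ : φ ≤ θ) (hθ : θ < π / 2) :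
    x + (2 * x * Real.sin (φ / 2) + y - x) * (π / 2) ≤
      y * max (π / 2) (π * Real.sin (θ / 2) + 1) := by
  have hpi := Real.pi_pos
  have hsins : Real.sin (φ / 2) ≤ Real.sin (θ / 2) := by
    apply Real.strictMonoOn_sin.monotoneOn
    · constructor <;> nlinarith
    · constructor <;> nlinarith
    · linarith
  have hrw : x + (2 * x * Real.sin (φ / 2) + y - x) * (π / 2)
      = y * (π / 2) + x * (π * Real.sin (φ / 2) + 1 - π / 2) := by ring
  rw [hrw]
  rcases le_or_gt (π * Real.sin (θ / 2) + 1) (π / 2) with h | h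
  · have hmax : max (π / 2) (π * Real.sin (θ / 2) + 1) = π / 2 := max_eq_left h
    rw [hmax]
    have h1 : π * Real.sin (φ / 2) ≤ π * Real.sin (θ / 2) :=
      mul_le_mul_of_nonneg_left hsins hpi.le
    nlinarith [mul_nonneg hx.le (by linarith : (0:ℝ) ≤ π / 2 - (π * Real.sin (φ / 2) + 1))]
  · have hmax : max (π / 2) (π * Real.sin (θ / 2) + 1) = π * Real.sin (θ / 2) + 1 :=
      max_eq_right h.le
    rw [hmax]
    have h1 : π * Real.sin (φ / 2) ≤ π * Real.sin (θ / 2) :=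
      mul_le_mul_of_nonneg_left hsins hpi.le
    have h2 : x * (π * Real.sin (φ / 2) + 1 - π / 2) ≤ y * (π * Real.sin (θ / 2) + 1 - π / 2) := by
      rcases le_or_gt (π * Real.sin (φ / 2) + 1 - π / 2) 0 with hc | hc
      · nlinarith
      · calc x * (π * Real.sin (φ / 2) + 1 - π / 2) ≤ y * (π * Real.sin (φ / 2) + 1 - π / 2) :=
              mul_le_mul_of_nonneg_right hxy hc.le
          _ ≤ y * (π * Real.sin (θ / 2) + 1 - π / 2) := by
              apply mul_le_mul_of_nonneg_left (by linarith) (by linarith)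
    linarith
end

section
/- Consider the credit-pruning process: each newly added boundary edge uv receives credit equal to credit(∂P(u,v)) − |uv| if uv is included (which happens when weight(∂P(u,v)) > (1+1/r)·|uv|, in which case weight(uv) := |uv|), and credit equal to credit(∂P(u,v)) if uv is excluded (in which case weight(uv) := weight(∂P(u,v))). If initially credit(e) = r·weight(e) for every boundary edge e, then invariantly credit(e) ≥ r·weight(e) ≥ 0 for every boundary edge e at all times. -/
open Finset

/-- Credit-pruning invariant: boundary edges carry a length, weight and credit. At each step
a set `S` of boundary edges is replaced by a new edge `enew`; if `Σ_{e∈S} weight(e) >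
(1+1/r)·|enew|` then `enew` is included with `weight(enew) = |enew|` and
`credit(enew) = credit(S) − |enew|`; otherwise `enew` is excluded with
`weight(enew) = weight(S)` and `credit(enew) = credit(S)`. If initially
`credit(e) = r·weight(e) ≥ 0`, then at all times `credit(e) ≥ r·weight(e) ≥ 0` for every
boundary edge `e`. -/
theorem credit_invariant {E : Type*} [DecidableEq E] (r : ℝ) (hr : 0 < r)
    (len wgt cr : E → ℝ) (hlen : ∀ e, 0 ≤ len e)
    (state : ℕ → Finset E)
    (hinit : ∀ e ∈ state 0, cr e = r * wgt e ∧ 0 ≤ wgt e)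
    (hstep : ∀ n, ∃ (S : Finset E) (enew : E), S ⊆ state n ∧ enew ∉ state n \ S ∧
      state (n + 1) = insert enew (state n \ S) ∧
      ((∑ e ∈ S, wgt e > (1 + 1 / r) * len enew ∧ wgt enew = len enew ∧
          cr enew = (∑ e ∈ S, cr e) - len enew) ∨
        (∑ e ∈ S, wgt e ≤ (1 + 1 / r) * len enew ∧ wgt enew = ∑ e ∈ S, wgt e ∧
          cr enew = ∑ e ∈ S, cr e))) :
    ∀ n, ∀ e ∈ state n, r * wgt e ≤ cr e ∧ 0 ≤ wgt e := by
  intro n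
  induction n with
  | zero => intro e he; exact ⟨(hinit e he).1.ge, (hinit e he).2⟩
  | succ n ih =>
    obtain ⟨S, enew, hS, hnew, hst, hcase⟩ := hstep n
    intro e he
    rw [hst, Finset.mem_insert] at he
    rcases he with rfl | he
    · have hwS : 0 ≤ ∑ x ∈ S, wgt x :=
        Finset.sum_nonneg fun x hx => (ih x (hS hx)).2
      have hcS : r * (∑ x ∈ S, wgt x) ≤ ∑ x ∈ S, cr x := by
        rw [Finset.mul_sum]
        exact Finset.sum_le_sum fun x hx => (ih x (hS hx)).1
      rcases hcase with ⟨hgt, hw, hc⟩ | ⟨hle, hw, hc⟩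
      · refine ⟨?_, hw ▸ hlen e⟩
        rw [hw, hc]
        have h1 : (r + 1) * len e ≤ r * ((1 + 1 / r) * len e) := by
          have : r * (1 + 1/r) = r + 1 := by field_simp
          rw [← mul_assoc, this]
        have h2 : r * ((1 + 1/r) * len e) ≤ r * ∑ x ∈ S, wgt x :=
          mul_le_mul_of_nonneg_left hgt.le hr.le
        linarith
      · exact ⟨by rw [hw, hc]; exact hcS, hw ▸ hwS⟩
    · exact ih e (Finset.mem_sdiff.mp he).1
end

section
/- In the Levcopoulos–Lingas pruning process with parameter r > 0, the total Euclidean length of all included edges (minimum-spanning-tree edges plus edges added during the process) is at most (2r+1) times the weight of the minimum spanning tree. -/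
open Finset

/-- In the Levcopoulos–Lingas pruning process with parameter `r > 0` — starting from the
MST edges (total length `W`) as included edges and a boundary (the Euler tour) of total
credit `2rW` with `credit(e) = r·weight(e) ≥ 0` per edge, and at each step replacing a set
`S` of boundary edges by a new edge which is included iff `weight(S) > (1+1/r)·|enew|` —
the total length of included edges never exceeds `(2r+1)·W`. -/
theorem pruning_weight_bound {E : Type*} [DecidableEq E] (r W : ℝ) (hr : 0 < r)
    (hW : 0 ≤ W) (len wgt cr : E → ℝ) (hlen : ∀ e, 0 ≤ len e)
    (boundary inc : ℕ → Finset E)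
    (hinit_cr : ∀ e ∈ boundary 0, cr e = r * wgt e ∧ 0 ≤ wgt e)
    (hinit_total : ∑ e ∈ boundary 0, cr e = 2 * r * W)
    (hinc0 : ∑ e ∈ inc 0, len e = W)
    (hstep : ∀ n, ∃ (S : Finset E) (enew : E), S ⊆ boundary n ∧
      enew ∉ boundary n \ S ∧ enew ∉ inc n ∧
      boundary (n + 1) = insert enew (boundary n \ S) ∧
      ((∑ e ∈ S, wgt e > (1 + 1 / r) * len enew ∧ wgt enew = len enew ∧
          cr enew = (∑ e ∈ S, cr e) - len enew ∧ inc (n + 1) = insert enew (inc n)) ∨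
        (∑ e ∈ S, wgt e ≤ (1 + 1 / r) * len enew ∧ wgt enew = ∑ e ∈ S, wgt e ∧
          cr enew = ∑ e ∈ S, cr e ∧ inc (n + 1) = inc n))) :
    ∀ n, ∑ e ∈ inc n, len e ≤ (2 * r + 1) * W := by
  have key : ∀ n, (∀ e ∈ boundary n, r * wgt e ≤ cr e ∧ 0 ≤ wgt e) ∧
      (∑ e ∈ boundary n, cr e) + (∑ e ∈ inc n, len e) ≤ (2 * r + 1) * W := by
    intro n
    induction n with
    | zero =>
      refine ⟨fun e he => ⟨(hinit_cr e he).1.ge, (hinit_cr e he).2⟩, ?_⟩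
      rw [hinit_total, hinc0]
      have : (2 * r + 1) * W = 2 * r * W + W := by ring
      linarith
    | succ n ih =>
      obtain ⟨hinv, hpot⟩ := ih
      obtain ⟨S, enew, hS, hne, hni, hb, hcase⟩ := hstep n
      have hSwgt : 0 ≤ ∑ e ∈ S, wgt e :=
        Finset.sum_nonneg fun e he => (hinv e (hS he)).2
      have hScr : r * ∑ e ∈ S, wgt e ≤ ∑ e ∈ S, cr e := by
        rw [Finset.mul_sum]
        exact Finset.sum_le_sum fun e he => (hinv e (hS he)).1
      have hbsum : ∑ e ∈ boundary (n + 1), cr e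
          = cr enew + ((∑ e ∈ boundary n, cr e) - ∑ e ∈ S, cr e) := by
        rw [hb, Finset.sum_insert hne, Finset.sum_sdiff_eq_sub hS]
      rcases hcase with ⟨hgt, hw, hc, hi⟩ | ⟨hle, hw, hc, hi⟩
      · have hnewinv : r * wgt enew ≤ cr enew ∧ 0 ≤ wgt enew := by
          constructor
          · rw [hw, hc]
            have h1 : r * ((1 + 1 / r) * len enew) ≤ r * ∑ e ∈ S, wgt e :=
              mul_le_mul_of_nonneg_left hgt.le hr.le
            have h2 : r * ((1 + 1 / r) * len enew) = r * len enew + len enew := by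
              field_simp
            linarith
          · rw [hw]; exact hlen enew
        constructor
        · intro e he
          rw [hb] at he
          rcases Finset.mem_insert.mp he with rfl | he'
          · exact hnewinv
          · exact hinv e (Finset.mem_sdiff.mp he').1
        · rw [hbsum, hi, Finset.sum_insert hni, hc]
          linarith
      · have hnewinv : r * wgt enew ≤ cr enew ∧ 0 ≤ wgt enew := by
          rw [hw, hc]; exact ⟨hScr, hSwgt⟩
        constructor
        · intro e he
          rw [hb] at he
          rcases Finset.mem_insert.mp he with rfl | he'
          · exact hnewinv
          · exact hinv e (Finset.mem_sdiff.mp he').1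
        · rw [hbsum, hi, hc]
          linarith
  intro n
  obtain ⟨hinv, hpot⟩ := key n
  have hcr : 0 ≤ ∑ e ∈ boundary n, cr e :=
    Finset.sum_nonneg fun e he =>
      le_trans (mul_nonneg hr.le (hinv e he).2) (hinv e he).1
  linarith
end

section
/- In the pruning process with parameter r > 0, for every excluded edge uv there is a path between u and v using only included edges of total length at most (1 + 1/r)·|uv|. -/
/-! Strengthen the claim to: every settled edge `i` is joined by an included-edge chain of
length at most its weight. Included edges are their own chain; an excluded edge's boundary path
consists of earlier edges, so by strong induction along the settling order each of them can be
replaced by its included chain, and the boundary weight is at most `(1 + 1/r)·|uv|`. -/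

/-- `IsEdgeChain ue ve a b l` : the list of edge indices `l` (edge `i` having endpoints
`ue i` and `ve i`) forms a chain of consecutively incident edges from `a` to `b`. -/
def IsEdgeChain {V : Type*} {n : ℕ} (ue ve : Fin n → V) : V → V → List (Fin n) → Prop
  | a, b, [] => a = b
  | a, b, i :: l =>
      (ue i = a ∧ IsEdgeChain ue ve (ve i) b l) ∨
      (ve i = a ∧ IsEdgeChain ue ve (ue i) b l)

namespace IsEdgeChain

variable {V : Type*} {n : ℕ} {ue ve : Fin n → V}

lemma single (i : Fin n) : IsEdgeChain ue ve (ue i) (ve i) [i] :=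
  Or.inl ⟨rfl, rfl⟩

lemma append : ∀ {l l' : List (Fin n)} {a b c : V},
    IsEdgeChain ue ve a b l → IsEdgeChain ue ve b c l' → IsEdgeChain ue ve a c (l ++ l')
  | [], _, _, _, _, rfl, h' => h'
  | _ :: _, _, _, _, _, .inl ⟨ha, h⟩, h' => .inl ⟨ha, h.append h'⟩
  | _ :: _, _, _, _, _, .inr ⟨ha, h⟩, h' => .inr ⟨ha, h.append h'⟩

lemma reverse : ∀ {l : List (Fin n)} {a b : V},
    IsEdgeChain ue ve a b l → IsEdgeChain ue ve b a l.reverse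
  | [], _, _, h => h.symm
  | i :: _, _, _, .inl ⟨ha, h⟩ => by
      rw [List.reverse_cons]; exact h.reverse.append (.inr ⟨rfl, ha⟩)
  | i :: _, _, _, .inr ⟨ha, h⟩ => by
      rw [List.reverse_cons]; exact h.reverse.append (.inl ⟨rfl, ha⟩)

end IsEdgeChain

def HasChainLE {V : Type*} {n : ℕ} (ue ve : Fin n → V) (P : Fin n → Prop) (c : Fin n → ℝ)
    (a b : V) (w : ℝ) : Prop :=
  ∃ l : List (Fin n), (∀ j ∈ l, P j) ∧ IsEdgeChain ue ve a b l ∧ (l.map c).sum ≤ w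

namespace HasChainLE

variable {V : Type*} {n : ℕ} {ue ve : Fin n → V} {P : Fin n → Prop} {c : Fin n → ℝ}
  {a b d : V} {w w' : ℝ}

lemma refl (a : V) : HasChainLE ue ve P c a a 0 :=
  ⟨[], by simp, rfl, by simp⟩

lemma of_edge {i : Fin n} (hi : P i) : HasChainLE ue ve P c (ue i) (ve i) (c i) :=
  ⟨[i], by simpa using hi, .single i, by simp⟩

lemma mono (h : HasChainLE ue ve P c a b w) (hw : w ≤ w') : HasChainLE ue ve P c a b w' :=
  let ⟨l, hP, hl, hc⟩ := h
  ⟨l, hP, hl, hc.trans hw⟩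

lemma symm (h : HasChainLE ue ve P c a b w) : HasChainLE ue ve P c b a w :=
  let ⟨l, hP, hl, hc⟩ := h
  ⟨l.reverse, fun j hj => hP j (List.mem_reverse.1 hj), hl.reverse, by simpa using hc⟩

lemma trans (h : HasChainLE ue ve P c a b w) (h' : HasChainLE ue ve P c b d w') :
    HasChainLE ue ve P c a d (w + w') :=
  let ⟨l, hP, hl, hc⟩ := h
  let ⟨l', hP', hl', hc'⟩ := h'
  ⟨l ++ l', by simpa [or_imp, forall_and] using ⟨hP, hP'⟩, hl.append hl',
    by simpa using add_le_add hc hc'⟩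

lemma of_isEdgeChain {w : Fin n → ℝ} :
    ∀ {l : List (Fin n)} {a b : V}, IsEdgeChain ue ve a b l →
      (∀ j ∈ l, HasChainLE ue ve P c (ue j) (ve j) (w j)) →
      HasChainLE ue ve P c a b (l.map w).sum
  | [], a, _, rfl, _ => by simpa using refl a
  | j :: _, _, _, .inl ⟨rfl, hl⟩, hw => by
      simpa using (hw j (by simp)).trans (of_isEdgeChain hl fun k hk => hw k (by simp [hk]))
  | j :: _, _, _, .inr ⟨rfl, hl⟩, hw => by
      simpa using (hw j (by simp)).symm.trans
        (of_isEdgeChain hl fun k hk => hw k (by simp [hk]))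

theorem of_settled {w : Fin n → ℝ} (hP : ∀ i, P i → c i ≤ w i)
    (hnP : ∀ i, ¬P i → ∃ l : List (Fin n), (∀ j ∈ l, j < i) ∧
      IsEdgeChain ue ve (ue i) (ve i) l ∧ (l.map w).sum ≤ w i)
    (i : Fin n) : HasChainLE ue ve P c (ue i) (ve i) (w i) := by
  induction i using WellFoundedLT.induction with
  | ind i ih =>
    by_cases hi : P i
    · exact (of_edge hi).mono (hP i hi)
    · obtain ⟨l, hlt, hl, hw⟩ := hnP i hi
      exact (of_isEdgeChain hl fun j hj => ih j (hlt j hj)).mono hw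

end HasChainLE

theorem excluded_edge_face_path_general {V : Type*} (r : ℝ) (n : ℕ)
    (p : V → EuclideanSpace ℝ (Fin 2))
    (ue ve : Fin n → V) (inc : Fin n → Prop) (wgt : Fin n → ℝ)
    (hinc : ∀ i, inc i → wgt i = dist (p (ue i)) (p (ve i)))
    (hexc : ∀ i, ¬inc i → ∃ l : List (Fin n),
      (∀ j ∈ l, (j : ℕ) < (i : ℕ)) ∧
      IsEdgeChain ue ve (ue i) (ve i) l ∧
      wgt i = (l.map wgt).sum ∧
      (l.map wgt).sum ≤ (1 + 1 / r) * dist (p (ue i)) (p (ve i))) :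
    ∀ i, ¬inc i → ∃ l : List (Fin n), (∀ j ∈ l, inc j) ∧
      IsEdgeChain ue ve (ue i) (ve i) l ∧
      (l.map fun j => dist (p (ue j)) (p (ve j))).sum ≤
        (1 + 1 / r) * dist (p (ue i)) (p (ve i)) := by
  intro i hi
  have hchain : HasChainLE ue ve inc (fun j => dist (p (ue j)) (p (ve j))) (ue i) (ve i)
      (wgt i) := by
    refine HasChainLE.of_settled (fun j hj => (hinc j hj).ge) (fun j hj => ?_) i
    obtain ⟨l, hlt, hl, hsum, -⟩ := hexc j hj
    exact ⟨l, hlt, hl, hsum.ge⟩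
  obtain ⟨l, -, -, hsum, hbound⟩ := hexc i hi
  exact hchain.mono (hsum ▸ hbound)

/-- In the pruning process, edges are settled in order; an included edge has weight equal to
its Euclidean length, and an excluded edge `uv` has a boundary path of previously settled
edges from `u` to `v` whose total weight is at most `(1+1/r)·|uv|` and equals `weight(uv)`.
Then every excluded edge `uv` admits a path of included edges from `u` to `v` of total
Euclidean length at most `(1+1/r)·|uv|`. -/
theorem excluded_edge_face_path {V : Type*} (r : ℝ) (hr : 0 < r) (n : ℕ)
    (p : V → EuclideanSpace ℝ (Fin 2))
    (ue ve : Fin n → V) (inc : Fin n → Prop) (wgt : Fin n → ℝ)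
    (hinc : ∀ i, inc i → wgt i = dist (p (ue i)) (p (ve i)))
    (hexc : ∀ i, ¬inc i → ∃ l : List (Fin n),
      (∀ j ∈ l, (j : ℕ) < (i : ℕ)) ∧
      IsEdgeChain ue ve (ue i) (ve i) l ∧
      wgt i = (l.map wgt).sum ∧
      (l.map wgt).sum ≤ (1 + 1 / r) * dist (p (ue i)) (p (ve i))) :
    ∀ i, ¬inc i → ∃ l : List (Fin n), (∀ j ∈ l, inc j) ∧
      IsEdgeChain ue ve (ue i) (ve i) l ∧
      (l.map fun j => dist (p (ue j)) (p (ve j))).sum ≤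
        (1 + 1 / r) * dist (p (ue i)) (p (ve i)) :=
  excluded_edge_face_path_general r n p ue ve inc wgt hinc hexc
end

section
/- Let s, t be points with segment [st] horizontal, and let C be a circle passing through points v above [st] and v' below [st] whose center O' lies on the perpendicular bisector of [vv']. If O' is moved along this bisector in the direction of the counterclockwise arc from v to v' until either the line st is tangent to the circle or v is the leftmost point of the circle (whichever occurs first), and v lies above st strictly between the leftmost point of the original circle and its left intersection with st, then v becomes the leftmost point of the resulting circle (the tangency case does not occur first). -/
/-!
The centre stays on the perpendicular bisector of `[vv']`, which meets the horizontal line through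
`v` to the right of `v`; moving the centre there along the bisector keeps it above `v`. For any
such centre `Q`, the distance to the line `st` is `Q 1 - s 1 < Q 1 - v' 1 ≤ dist Q v' = dist Q v`,
since `v'` lies below `st`.
-/

open AffineSubspace

lemma EuclideanSpace.dist_sq_eq_fin_two (x y : EuclideanSpace ℝ (Fin 2)) :
    dist x y ^ 2 = (x 0 - y 0) ^ 2 + (x 1 - y 1) ^ 2 := by
  simp [EuclideanSpace.dist_sq_eq, Fin.sum_univ_two, Real.dist_eq, sq_abs]

lemma abs_apply_sub_lt_dist_of_dist_eq {ι : Type*} [Fintype ι] {Q v v' : EuclideanSpace ℝ ι}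
    {i : ι} {c : ℝ} (hQ : dist Q v = dist Q v') (hv' : v' i < c) (hc : c ≤ Q i) :
    |Q i - c| < dist Q v :=
  calc |Q i - c| = Q i - c := abs_of_nonneg (sub_nonneg.mpr hc)
    _ < |Q i - v' i| := by rw [abs_of_pos (by linarith)]; linarith
    _ ≤ dist Q v' := PiLp.dist_apply_le Q v' i
    _ = dist Q v := hQ.symm

lemma apply_zero_lt_of_dist_eq {O v v' : EuclideanSpace ℝ (Fin 2)} (hO : dist O v = dist O v')
    (hvx : v 0 ≤ O 0) (hvy : v 1 ≤ O 1) (hv' : v' 1 < v 1) : v 0 < v' 0 := by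
  have hsq := congrArg (· ^ 2) hO
  simp only [EuclideanSpace.dist_sq_eq_fin_two] at hsq
  nlinarith

lemma exists_dist_eq_apply_one_eq {v v' : EuclideanSpace ℝ (Fin 2)} (h : v 0 < v' 0) :
    ∃ P : EuclideanSpace ℝ (Fin 2), dist P v = dist P v' ∧ P 1 = v 1 ∧ v 0 ≤ P 0 := by
  have hne : v' 0 - v 0 ≠ 0 := (sub_pos.mpr h).ne'
  -- `d` solves `d ^ 2 = (d - (v' 0 - v 0)) ^ 2 + (v 1 - v' 1) ^ 2`.
  set d := dist v v' ^ 2 / (2 * (v' 0 - v 0)) with hd_def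
  have hd : 0 ≤ d := div_nonneg (sq_nonneg _) (by linarith)
  refine ⟨!₂[v 0 + d, v 1], ?_, rfl, by simpa using hd⟩
  rw [← sq_eq_sq₀ dist_nonneg dist_nonneg, EuclideanSpace.dist_sq_eq_fin_two,
    EuclideanSpace.dist_sq_eq_fin_two]
  rw [EuclideanSpace.dist_sq_eq_fin_two] at hd_def
  simp only [Matrix.cons_val_zero, Matrix.cons_val_one]
  rw [hd_def]
  field_simp
  ring

theorem worst_case_circle_general (s v v' O : EuclideanSpace ℝ (Fin 2))
    (hv_above : s 1 < v 1) (hv'_below : v' 1 < s 1)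
    (hcirc : dist O v = dist O v')
    (hvx : v 0 < O 0) (hvy : v 1 < O 1) :
    ∃ P : EuclideanSpace ℝ (Fin 2),
      dist P v = dist P v' ∧ P 1 = v 1 ∧ v 0 ≤ P 0 ∧
      ∀ Q ∈ segment ℝ O P, |Q 1 - s 1| < dist Q v := by
  obtain ⟨P, hPv, hP1, hP0⟩ :=
    exists_dist_eq_apply_one_eq (apply_zero_lt_of_dist_eq hcirc hvx.le hvy.le (by linarith))
  refine ⟨P, hPv, hP1, hP0, fun Q hQ => ?_⟩
  have hconv : Convex ℝ
      ((perpBisector v v' : Set _) ∩ {Q : EuclideanSpace ℝ (Fin 2) | v 1 ≤ Q 1}) :=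
    (perpBisector v v').convex.inter (convex_halfSpace_ge (EuclideanSpace.projₗ 1).isLinear _)
  obtain ⟨hQv, hQ1⟩ := hconv.segment_subset ⟨mem_perpBisector_iff_dist_eq.mpr hcirc, hvy.le⟩
    ⟨mem_perpBisector_iff_dist_eq.mpr hPv, hP1.ge⟩ hQ
  exact abs_apply_sub_lt_dist_of_dist_eq (mem_perpBisector_iff_dist_eq.mp hQv) hv'_below
    (hv_above.le.trans hQ1)

/-- Worst Case Circle construction. Let `[st]` be horizontal, and let a circle of centre `O`
pass through `v` (above `[st]`) and `v'` (below `[st]`). Suppose `v` lies on the left arc,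
strictly between the leftmost point of the circle and its left intersection with `[st]`
(`v 0 < O 0`, `s 1 < v 1 < O 1`). Then the centre can be moved along the perpendicular
bisector of `[vv']` to a point `P` for which `v` is the leftmost point of the circle through
`v` and `v'` centred at `P`, while at no intermediate centre `Q` is the line `st` tangent to
(or disjoint from) the corresponding circle: the distance from `Q` to the line stays
strictly below the radius. -/
theorem worst_case_circle (s t v v' O : EuclideanSpace ℝ (Fin 2))
    (hst : s 1 = t 1) (hstx : s 0 < t 0)
    (hv_above : s 1 < v 1) (hv'_below : v' 1 < s 1)
    (hcirc : dist O v = dist O v')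
    (hvx : v 0 < O 0) (hvy : v 1 < O 1) :
    ∃ P : EuclideanSpace ℝ (Fin 2),
      dist P v = dist P v' ∧ P 1 = v 1 ∧ v 0 ≤ P 0 ∧
      ∀ Q ∈ segment ℝ O P, |Q 1 - s 1| < dist Q v :=
  worst_case_circle_general s v v' O hv_above hv'_below hcirc hvx hvy
end
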